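/- Let Γ and Δ be countably generated MC-semigroups. If H^Γ_LC(𝕌) = H^Δ_LC(𝕌) (in particular, whenever a group isomorphism between H^Γ_LC(𝕌) and H^Δ_LC(𝕌) is induced by a conjugating homeomorphism of 𝕌 as in the reconstruction theorem), then Γ = Δ. -/

import Mathlib

open Metric Set

/-- The Urysohn space: a complete separable metric space which is universal for
separable metric spaces and finitely ultrahomogeneous. -/
def IsUrysohn (U : Type) [MetricSpace U] : Prop :=
  CompleteSpace U ∧ TopologicalSpace.SeparableSpace U ∧
  (∀ (Y : Type) [MetricSpace Y] [TopologicalSpace.SeparableSpace Y],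
      ∃ f : Y → U, Isometry f) ∧
  (∀ (A : Set U) (f : U → U), A.Finite →
      (∀ u ∈ A, ∀ v ∈ A, dist (f u) (f v) = dist u v) →
      ∃ g : U ≃ᵢ U, ∀ u ∈ A, g u = f u)

/-- A modulus of continuity: a concave homeomorphism of `[0,∞)` onto itself. -/
def IsModulus (α : ℝ → ℝ) : Prop :=
  α 0 = 0 ∧ StrictMonoOn α (Set.Ici (0 : ℝ)) ∧
  MapsTo α (Set.Ici (0 : ℝ)) (Set.Ici (0 : ℝ)) ∧
  SurjOn α (Set.Ici (0 : ℝ)) (Set.Ici (0 : ℝ)) ∧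
  ConcaveOn ℝ (Set.Ici (0 : ℝ)) α

/-- `α ⪯ β`: `α ≤ β` on some interval `[0,a]`, `a > 0`. -/
def MCle (α β : ℝ → ℝ) : Prop :=
  ∃ a : ℝ, 0 < a ∧ ∀ x ∈ Set.Icc (0 : ℝ) a, α x ≤ β x

/-- An MC-semigroup: a set of moduli of continuity containing `x ↦ 2x`,
closed under composition, and downward closed under `⪯`. -/
def IsMCSemigroup (Γ : Set (ℝ → ℝ)) : Prop :=
  (∀ α ∈ Γ, IsModulus α) ∧
  ((fun x : ℝ => 2 * x) ∈ Γ) ∧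
  (∀ α ∈ Γ, ∀ β ∈ Γ, (α ∘ β) ∈ Γ) ∧
  (∀ α ∈ Γ, ∀ β : ℝ → ℝ, IsModulus β → MCle β α → β ∈ Γ)

/-- A countably generated MC-semigroup. -/
def MCCountablyGenerated (Γ : Set (ℝ → ℝ)) : Prop :=
  ∃ Γ₀ : Set (ℝ → ℝ), Γ₀ ⊆ Γ ∧ Γ₀.Countable ∧ ∀ α ∈ Γ, ∃ β ∈ Γ₀, MCle α β

/-- `f` is locally `Γ`-continuous: every point has a neighborhood on which `f`
is `α`-continuous for some `α ∈ Γ`. -/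
def LocallyGammaCont (Γ : Set (ℝ → ℝ)) {A B : Type}
    [MetricSpace A] [MetricSpace B] (f : A → B) : Prop :=
  ∀ x : A, ∃ ε : ℝ, 0 < ε ∧ ∃ α ∈ Γ,
    ∀ u v : A, dist u x < ε → dist v x < ε → dist (f u) (f v) ≤ α (dist u v)

/-- A homeomorphism is locally `Γ`-bicontinuous if both it and its inverse are
locally `Γ`-continuous. -/
def LocallyGammaBicont (Γ : Set (ℝ → ℝ)) {A B : Type}
    [MetricSpace A] [MetricSpace B] (e : A ≃ₜ B) : Prop :=
  LocallyGammaCont Γ (⇑e) ∧ LocallyGammaCont Γ (⇑e.symm)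

section ModLemmas

variable {α : ℝ → ℝ}

lemma mod_nonneg (h : IsModulus α) {t : ℝ} (ht : 0 ≤ t) : 0 ≤ α t :=
  h.2.2.1 ht

lemma mod_mono (h : IsModulus α) {s t : ℝ} (hs : 0 ≤ s) (hst : s ≤ t) : α s ≤ α t :=
  h.2.1.monotoneOn hs (le_trans hs hst) hst

lemma mod_subadd (h : IsModulus α) {s t : ℝ} (hs : 0 ≤ s) (ht : 0 ≤ t) :
    α (s + t) ≤ α s + α t := by
  rcases eq_or_lt_of_le hs with rfl | hs'
  · simp [h.1]
  rcases eq_or_lt_of_le ht with rfl | ht'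
  · simp [h.1]
  have hst : 0 < s + t := by linarith
  have h1 : (t / (s + t)) * α 0 + (s / (s + t)) * α (s + t) ≤ α s := by
    have := h.2.2.2.2.2 (mem_Ici.2 (le_refl (0:ℝ))) (mem_Ici.2 hst.le)
      (by positivity : (0:ℝ) ≤ t / (s+t)) (by positivity : (0:ℝ) ≤ s / (s+t))
      (by field_simp; ring)
    have harg : (t / (s + t)) • (0:ℝ) + (s / (s + t)) • (s + t) = s := by
      simp only [smul_eq_mul, mul_zero, zero_add]; exact div_mul_cancel₀ s hst.ne'
    rw [harg] at this
    simpa [smul_eq_mul] using this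
  have h2 : (s / (s + t)) * α 0 + (t / (s + t)) * α (s + t) ≤ α t := by
    have := h.2.2.2.2.2 (mem_Ici.2 (le_refl (0:ℝ))) (mem_Ici.2 hst.le)
      (by positivity : (0:ℝ) ≤ s / (s+t)) (by positivity : (0:ℝ) ≤ t / (s+t))
      (by field_simp)
    have harg : (s / (s + t)) • (0:ℝ) + (t / (s + t)) • (s + t) = t := by
      simp only [smul_eq_mul, mul_zero, zero_add]; exact div_mul_cancel₀ t hst.ne'
    rw [harg] at this
    simpa [smul_eq_mul] using this
  rw [h.1] at h1 h2
  have hsum : (s / (s + t)) * α (s + t) + (t / (s + t)) * α (s + t) = α (s + t) := by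
    field_simp
  linarith

lemma mod_chord (h : IsModulus α) {t t₀ : ℝ} (ht : 0 < t) (htt : t ≤ t₀) :
    (t / t₀) * α t₀ ≤ α t := by
  have ht₀ : 0 < t₀ := lt_of_lt_of_le ht htt
  have := h.2.2.2.2.2 (mem_Ici.2 ht₀.le) (mem_Ici.2 (le_refl (0:ℝ)))
    (by positivity : (0:ℝ) ≤ t / t₀)
    (by
      have : t / t₀ ≤ 1 := by
        rw [div_le_one ht₀]; exact htt
      linarith : (0:ℝ) ≤ 1 - t / t₀)
    (by ring)
  have harg : (t / t₀) • t₀ + (1 - t / t₀) • (0:ℝ) = t := by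
    simp only [smul_eq_mul, mul_zero, add_zero]; exact div_mul_cancel₀ t ht₀.ne'
  rw [harg] at this
  rw [h.1] at this
  simpa [smul_eq_mul] using this

lemma mod_cont0 (h : IsModulus α) {ε : ℝ} (hε : 0 < ε) :
    ∃ η, 0 < η ∧ ∀ t, 0 ≤ t → t ≤ η → α t ≤ ε := by
  obtain ⟨x, hx, hαx⟩ := h.2.2.2.1 (mem_Ici.2 hε.le)
  have hx0 : 0 < x := by
    rcases eq_or_lt_of_le (mem_Ici.1 hx) with rfl | hx'
    · rw [h.1] at hαx; exact absurd hαx.symm (ne_of_gt hε)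
    · exact hx'
  exact ⟨x, hx0, fun t ht htx => by
    calc α t ≤ α x := mod_mono h ht htx
    _ = ε := hαx⟩

end ModLemmas

section Realize

variable {U : Type} [MetricSpace U]

/-- Finite injectivity of the Urysohn space: any Katetov function over a finite
subset is realized by a point. -/
lemma urysohn_realize (hU : IsUrysohn U) (A : Finset U) (r : U → ℝ)
    (h0 : ∀ a ∈ A, 0 ≤ r a)
    (h1 : ∀ a ∈ A, ∀ b ∈ A, |r a - r b| ≤ dist a b)
    (h2 : ∀ a ∈ A, ∀ b ∈ A, dist a b ≤ r a + r b) :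
    ∃ y : U, ∀ a ∈ A, dist y a = r a := by
  classical
  have hneU : Nonempty U := by
    obtain ⟨f, -⟩ := hU.2.2.1 ℝ
    exact ⟨f 0⟩
  by_cases hA : ∃ a ∈ A, r a = 0
  · obtain ⟨a₀, ha₀, hr₀⟩ := hA
    refine ⟨a₀, fun a ha => ?_⟩
    have habs := h1 a₀ ha₀ a ha
    have hsum := h2 a₀ ha₀ a ha
    rw [hr₀] at habs hsum
    rw [abs_le] at habs
    have h3 : r a ≤ dist a₀ a := by
      have := habs.1
      linarith
    have h4 : dist a₀ a ≤ r a := by linarith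
    linarith
  · push_neg at hA
    have hpos : ∀ a ∈ A, 0 < r a := fun a ha =>
      lt_of_le_of_ne (h0 a ha) (Ne.symm (hA a ha))
    set S := {a : U // a ∈ A} with hS
    let dX : Option S → Option S → ℝ := fun x y =>
      match x, y with
      | some a, some b => dist a.1 b.1
      | some a, none => r a.1
      | none, some b => r b.1
      | none, none => 0
    letI : MetricSpace (Option S) :=
      { dist := dX
        dist_self := by rintro (_ | a) <;> simp [dX]
        dist_comm := by
          rintro (_ | a) (_ | b) <;> simp [dX, dist_comm]
        dist_triangle := by
          rintro (_ | a) (_ | b) (_ | c) <;> simp only [dX]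
          · norm_num
          · simp
          · linarith [h0 b.1 b.2]
          · have := h1 b.1 b.2 c.1 c.2
            rw [abs_le] at this
            linarith
          · simp
          · exact h2 a.1 a.2 c.1 c.2
          · have := h1 a.1 a.2 b.1 b.2
            rw [abs_le] at this
            linarith
          · exact dist_triangle a.1 b.1 c.1
        eq_of_dist_eq_zero := by
          rintro (_ | a) (_ | b) h <;> simp only [dX] at h
          · rfl
          · exact absurd h.symm (ne_of_lt (hpos b.1 b.2))
          · exact absurd h.symm (ne_of_lt (hpos a.1 a.2))
          · congr 1
            exact Subtype.ext (eq_of_dist_eq_zero h) }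
    obtain ⟨j, hj⟩ := hU.2.2.1 (Option S)
    have hinj := hj.injective
    let f : U → U := fun u => if h : ∃ s : S, j (some s) = u then h.choose.1 else u
    have hf : ∀ s : S, f (j (some s)) = s.1 := by
      intro s
      have hex : ∃ s' : S, j (some s') = j (some s) := ⟨s, rfl⟩
      have hch : hex.choose = s := by
        have := hex.choose_spec
        have := hinj this
        exact Option.some_injective _ this
      simp only [f, dif_pos hex, hch]
    set A' : Set U := Set.range (fun s : S => j (some s)) with hA'
    have hfin : A'.Finite := Set.finite_range _
    have hiso : ∀ u ∈ A', ∀ v ∈ A', dist (f u) (f v) = dist u v := by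
      rintro u ⟨s, rfl⟩ v ⟨s', rfl⟩
      rw [hf, hf, hj.dist_eq]
      rfl
    obtain ⟨G, hG⟩ := hU.2.2.2 A' f hfin hiso
    refine ⟨G (j none), fun a ha => ?_⟩
    have hmem : j (some (⟨a, ha⟩ : S)) ∈ A' := ⟨⟨a, ha⟩, rfl⟩
    have h5 : G (j (some (⟨a, ha⟩ : S))) = a := by
      rw [hG _ hmem, hf]
    calc dist (G (j none)) a = dist (G (j none)) (G (j (some ⟨a, ha⟩))) := by rw [h5]
    _ = dist (j none) (j (some ⟨a, ha⟩)) := G.dist_eq _ _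
    _ = r a := by rw [hj.dist_eq]; rfl

end Realize

section Band

open scoped Classical

variable {U : Type} [MetricSpace U]

/-- A configuration: a finite set of (domain, image) pairs whose image distances
lie in the band `[dist, Ψ ∘ dist]`. -/
def BandOK (Ψ : ℝ → ℝ) (F : Finset (U × U)) : Prop :=
  ∀ q ∈ F, ∀ q' ∈ F,
    dist q.1 q'.1 ≤ dist q.2 q'.2 ∧ dist q.2 q'.2 ≤ Ψ (dist q.1 q'.1)

variable {Ψ : ℝ → ℝ}

lemma psi_id (hΨ0 : Ψ 0 = 0)
    (hΨadd : ∀ e t, 0 ≤ e → 0 ≤ t → Ψ t + e ≤ Ψ (t + e)) :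
    ∀ t, 0 ≤ t → t ≤ Ψ t := by
  intro t ht
  have := hΨadd t 0 ht le_rfl
  simpa [hΨ0] using this

lemma psi_mono (hΨadd : ∀ e t, 0 ≤ e → 0 ≤ t → Ψ t + e ≤ Ψ (t + e)) :
    ∀ s t, 0 ≤ s → s ≤ t → Ψ s ≤ Ψ t := by
  intro s t hs hst
  have := hΨadd (t - s) s (by linarith) hs
  have h2 : s + (t - s) = t := by ring
  rw [h2] at this
  linarith

lemma psi_nonneg (hΨ0 : Ψ 0 = 0)
    (hΨadd : ∀ e t, 0 ≤ e → 0 ≤ t → Ψ t + e ≤ Ψ (t + e)) :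
    ∀ t, 0 ≤ t → 0 ≤ Ψ t := fun t ht =>
  le_trans ht (psi_id hΨ0 hΨadd t ht)

/-- Forward extension: add a new domain point `x`, with the canonical minimal
Katetov image distances. -/
lemma band_ext_fwd (hU : IsUrysohn U)
    (hΨ0 : Ψ 0 = 0)
    (hΨsub : ∀ s t, 0 ≤ s → 0 ≤ t → Ψ (s + t) ≤ Ψ s + Ψ t)
    (hΨadd : ∀ e t, 0 ≤ e → 0 ≤ t → Ψ t + e ≤ Ψ (t + e))
    (F : Finset (U × U)) (hne : F.Nonempty) (hF : BandOK Ψ F) (x : U) :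
    ∃ y : U,
      (∀ q ∈ F, dist y q.2 = F.inf' hne (fun q' => Ψ (dist x q'.1) + dist q'.2 q.2)) ∧
      BandOK Ψ (insert (x, y) F) := by
  have hid := psi_id hΨ0 hΨadd
  have hmono := psi_mono hΨadd
  have hnn := psi_nonneg hΨ0 hΨadd
  set r : U → ℝ := fun b => F.inf' hne (fun q' => Ψ (dist x q'.1) + dist q'.2 b) with hrdef
  have hub : ∀ (b : U) (q : U × U), q ∈ F → r b ≤ Ψ (dist x q.1) + dist q.2 b :=
    fun b q hq => Finset.inf'_le (fun q' => Ψ (dist x q'.1) + dist q'.2 b) hq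
  have hlb : ∀ (b : U) (c : ℝ), (∀ q ∈ F, c ≤ Ψ (dist x q.1) + dist q.2 b) → c ≤ r b :=
    fun b c h => Finset.le_inf' hne _ h
  have hmin : ∀ b : U, ∃ q ∈ F, r b = Ψ (dist x q.1) + dist q.2 b :=
    fun b => Finset.exists_mem_eq_inf' hne _
  have h0 : ∀ b : U, 0 ≤ r b := by
    intro b
    apply hlb
    intro q hq
    have h1 := hnn (dist x q.1) dist_nonneg
    have h2 : (0:ℝ) ≤ dist q.2 b := dist_nonneg
    linarith
  have hlip : ∀ b b' : U, r b ≤ r b' + dist b' b := by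
    intro b b'
    obtain ⟨q, hqm, hq⟩ := hmin b'
    have h3 := hub b q hqm
    have h4 := dist_triangle q.2 b' b
    rw [hq]
    linarith
  have h1 : ∀ b b' : U, |r b - r b'| ≤ dist b b' := by
    intro b b'
    rw [abs_sub_le_iff]
    constructor
    · have := hlip b b'
      rw [dist_comm b' b] at this
      linarith
    · have := hlip b' b
      linarith
  have h2 : ∀ b b' : U, dist b b' ≤ r b + r b' := by
    intro b b'
    obtain ⟨q, hqm, hq⟩ := hmin b
    obtain ⟨q', hqm', hq'⟩ := hmin b'
    have hband := (hF q hqm q' hqm').2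
    have htri : dist q.1 q'.1 ≤ dist x q.1 + dist x q'.1 := by
      have := dist_triangle q.1 x q'.1
      rw [dist_comm q.1 x] at this
      linarith
    have hup : dist q.2 q'.2 ≤ Ψ (dist x q.1) + Ψ (dist x q'.1) := by
      calc dist q.2 q'.2 ≤ Ψ (dist q.1 q'.1) := hband
      _ ≤ Ψ (dist x q.1 + dist x q'.1) := hmono _ _ dist_nonneg htri
      _ ≤ Ψ (dist x q.1) + Ψ (dist x q'.1) := hΨsub _ _ dist_nonneg dist_nonneg
    have htr4 := dist_triangle4 b q.2 q'.2 b'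
    have hc1 : dist b q.2 = dist q.2 b := dist_comm _ _
    rw [hq, hq']
    linarith
  obtain ⟨y, hy⟩ := urysohn_realize hU (F.image Prod.snd) r
    (fun b _ => h0 b)
    (fun b _ b' _ => h1 b b')
    (fun b _ b' _ => h2 b b')
  have hyq : ∀ q ∈ F, dist y q.2 = r q.2 := fun q hq =>
    hy q.2 (Finset.mem_image_of_mem Prod.snd hq)
  have hband : ∀ q' ∈ F, dist x q'.1 ≤ dist y q'.2 ∧ dist y q'.2 ≤ Ψ (dist x q'.1) := by
    intro q' hq'
    rw [hyq q' hq']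
    constructor
    · apply hlb
      intro q hq
      have hlow := (hF q hq q' hq').1
      have hxid := hid (dist x q.1) dist_nonneg
      have htri : dist x q'.1 ≤ dist x q.1 + dist q.1 q'.1 := dist_triangle _ _ _
      linarith
    · have := hub q'.2 q' hq'
      rw [dist_self, add_zero] at this
      exact this
  refine ⟨y, hyq, ?_⟩
  intro q hq q' hq'
  rcases Finset.mem_insert.1 hq with rfl | hq
  · rcases Finset.mem_insert.1 hq' with rfl | hq'
    · simp [hΨ0]
    · exact hband q' hq'
  · rcases Finset.mem_insert.1 hq' with rfl | hq'
    · have := hband q hq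
      rw [dist_comm q.1 (x, y).1, dist_comm q.2 (x, y).2]
      exact this
    · exact hF q hq q' hq'

/-- Backward extension: add a new image point `w`, with the canonical maximal
choice of domain distances. -/
lemma band_ext_bwd (hU : IsUrysohn U)
    (hΨ0 : Ψ 0 = 0)
    (hΨadd : ∀ e t, 0 ≤ e → 0 ≤ t → Ψ t + e ≤ Ψ (t + e))
    (F : Finset (U × U)) (hne : F.Nonempty) (hF : BandOK Ψ F) (w : U) :
    ∃ z : U,
      (∀ q ∈ F, dist z q.1 = F.inf' hne (fun q' => dist q'.2 w + dist q'.1 q.1)) ∧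
      BandOK Ψ (insert (z, w) F) := by
  have hid := psi_id hΨ0 hΨadd
  have hmono := psi_mono hΨadd
  set s : U → ℝ := fun a => F.inf' hne (fun q' => dist q'.2 w + dist q'.1 a) with hsdef
  have hub : ∀ (a : U) (q : U × U), q ∈ F → s a ≤ dist q.2 w + dist q.1 a :=
    fun a q hq => Finset.inf'_le (fun q' => dist q'.2 w + dist q'.1 a) hq
  have hlb : ∀ (a : U) (c : ℝ), (∀ q ∈ F, c ≤ dist q.2 w + dist q.1 a) → c ≤ s a :=
    fun a c h => Finset.le_inf' hne _ h
  have hmin : ∀ a : U, ∃ q ∈ F, s a = dist q.2 w + dist q.1 a :=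
    fun a => Finset.exists_mem_eq_inf' hne _
  have h0 : ∀ a : U, 0 ≤ s a := by
    intro a
    apply hlb
    intro q hq
    have h1 : (0:ℝ) ≤ dist q.2 w := dist_nonneg
    have h2 : (0:ℝ) ≤ dist q.1 a := dist_nonneg
    linarith
  have hlip : ∀ a a' : U, s a ≤ s a' + dist a' a := by
    intro a a'
    obtain ⟨q, hqm, hq⟩ := hmin a'
    have h3 := hub a q hqm
    have h4 := dist_triangle q.1 a' a
    rw [hq]
    have h5 := hub a q hqm
    calc s a ≤ dist q.2 w + dist q.1 a := h5
    _ ≤ dist q.2 w + (dist q.1 a' + dist a' a) := by linarith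
    _ = dist q.2 w + dist q.1 a' + dist a' a := by ring
  have h1 : ∀ a a' : U, |s a - s a'| ≤ dist a a' := by
    intro a a'
    rw [abs_sub_le_iff]
    constructor
    · have := hlip a a'
      rw [dist_comm a' a] at this
      linarith
    · have := hlip a' a
      linarith
  have h2 : ∀ a a' : U, dist a a' ≤ s a + s a' := by
    intro a a'
    obtain ⟨q, hqm, hq⟩ := hmin a
    obtain ⟨q', hqm', hq'⟩ := hmin a'
    have hlow := (hF q hqm q' hqm').1
    have hmid : dist q.1 q'.1 ≤ dist q.2 w + dist q'.2 w := by
      have h3 := dist_triangle q.2 w q'.2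
      rw [dist_comm w q'.2] at h3
      linarith
    have htr4 := dist_triangle4 a q.1 q'.1 a'
    have hc1 : dist a q.1 = dist q.1 a := dist_comm _ _
    rw [hq, hq']
    linarith
  obtain ⟨z, hz⟩ := urysohn_realize hU (F.image Prod.fst) s
    (fun a _ => h0 a)
    (fun a _ a' _ => h1 a a')
    (fun a _ a' _ => h2 a a')
  have hzq : ∀ q ∈ F, dist z q.1 = s q.1 := fun q hq =>
    hz q.1 (Finset.mem_image_of_mem Prod.fst hq)
  have hband : ∀ q' ∈ F, dist z q'.1 ≤ dist w q'.2 ∧ dist w q'.2 ≤ Ψ (dist z q'.1) := by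
    intro q' hq'
    rw [hzq q' hq']
    constructor
    · have := hub q'.1 q' hq'
      rw [dist_self, add_zero] at this
      rw [dist_comm w q'.2]
      exact this
    · obtain ⟨q, hqm, hq⟩ := hmin q'.1
      rw [hq]
      have hup := (hF q hqm q' hq').2
      have htri : dist w q'.2 ≤ dist w q.2 + dist q.2 q'.2 := dist_triangle _ _ _
      have harg : dist q.2 w + dist q.1 q'.1 = dist q.1 q'.1 + dist q.2 w := by ring
      rw [harg]
      have hstep := hΨadd (dist q.2 w) (dist q.1 q'.1) dist_nonneg dist_nonneg
      rw [dist_comm w q.2] at htri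
      linarith
  refine ⟨z, hzq, ?_⟩
  intro q hq q' hq'
  rcases Finset.mem_insert.1 hq with rfl | hq
  · rcases Finset.mem_insert.1 hq' with rfl | hq'
    · simp [hΨ0]
    · exact hband q' hq'
  · rcases Finset.mem_insert.1 hq' with rfl | hq'
    · have := hband q hq
      rw [dist_comm q.1 (z, w).1, dist_comm q.2 (z, w).2]
      exact this
    · exact hF q hq q' hq'

/-- Adding a fresh domain point at prescribed distance `val` from a base point `c`,
aligned through `c`. -/
lemma ext_dompt (hU : IsUrysohn U) (F : Finset (U × U)) (c : U) (val : ℝ) (hval : 0 ≤ val) :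
    ∃ x : U, dist x c = val ∧ ∀ q ∈ F, dist x q.1 = val + dist c q.1 := by
  obtain ⟨x, hx⟩ := urysohn_realize hU (insert c (F.image Prod.fst)) (fun a => val + dist c a)
    (by
      intro a _
      have : (0:ℝ) ≤ dist c a := dist_nonneg
      linarith)
    (by
      intro a _ b _
      have h := abs_dist_sub_le a b c
      rw [dist_comm a c, dist_comm b c] at h
      have heq : val + dist c a - (val + dist c b) = dist c a - dist c b := by ring
      rw [heq]
      exact h)
    (by
      intro a _ b _
      have h1 := dist_triangle a c b
      have h2 : dist a c = dist c a := dist_comm a c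
      linarith)
  refine ⟨x, ?_, ?_⟩
  · have := hx c (Finset.mem_insert_self _ _)
    simpa using this
  · intro q hq
    exact hx q.1 (Finset.mem_insert_of_mem (Finset.mem_image_of_mem Prod.fst hq))

end Band

section Chain

open scoped Classical

variable {U : Type} [MetricSpace U]

/-- The seed record at stage `i`: a pair of points near `p` at scale `2⁻ⁱ`
whose image distance beats the generator `B (unpair i).1`. -/
def SeedRec (B : ℕ → ℝ → ℝ) (p : U) (i : ℕ) (F : Finset (U × U)) : Prop :=
  ∃ u v bu bv : U, (u, bu) ∈ F ∧ (v, bv) ∈ F ∧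
    dist u p = (2⁻¹ : ℝ)^i ∧ 0 < dist u v ∧ dist u v ≤ (2⁻¹ : ℝ)^i ∧
    B (Nat.unpair i).1 (dist u v) < dist bu bv

lemma step_ex {Ψ : ℝ → ℝ} (hU : IsUrysohn U)
    (hΨ0 : Ψ 0 = 0)
    (hΨsub : ∀ s t, 0 ≤ s → 0 ≤ t → Ψ (s + t) ≤ Ψ s + Ψ t)
    (hΨadd : ∀ e t, 0 ≤ e → 0 ≤ t → Ψ t + e ≤ Ψ (t + e))
    (B : ℕ → ℝ → ℝ)
    (hbeat : ∀ k : ℕ, ∃ t : ℝ, 0 < t ∧ t ≤ (2⁻¹ : ℝ)^k ∧ B (Nat.unpair k).1 t < Ψ t)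
    (p : U) (wi : U) (i : ℕ) (F : Finset (U × U))
    (hF : BandOK Ψ F) (hp : (p, p) ∈ F) :
    ∃ F' : Finset (U × U), F ⊆ F' ∧ BandOK Ψ F' ∧ (p, p) ∈ F' ∧
      (∃ b, (wi, b) ∈ F') ∧ (∃ a, (a, wi) ∈ F') ∧ SeedRec B p i F' := by
  have hmono := psi_mono hΨadd
  have hne : F.Nonempty := ⟨_, hp⟩
  -- Step A: forward extension at `wi`
  obtain ⟨y1, -, h1band⟩ := band_ext_fwd hU hΨ0 hΨsub hΨadd F hne hF wi
  set F1 : Finset (U × U) := insert (wi, y1) F with hF1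
  have hp1 : (p, p) ∈ F1 := Finset.mem_insert_of_mem hp
  have hne1 : F1.Nonempty := ⟨_, hp1⟩
  -- Step B: backward extension hitting `wi`
  obtain ⟨z2, -, h2band⟩ := band_ext_bwd hU hΨ0 hΨadd F1 hne1 h1band wi
  set F2 : Finset (U × U) := insert (z2, wi) F1 with hF2
  have hp2 : (p, p) ∈ F2 := Finset.mem_insert_of_mem hp1
  have hne2 : F2.Nonempty := ⟨_, hp2⟩
  -- Step C: a fresh domain point u at distance 2⁻ⁱ from p, aligned through p
  obtain ⟨u, hup, hualign⟩ := ext_dompt hU F2 p ((2⁻¹ : ℝ)^i) (by positivity)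
  obtain ⟨yu, -, h3band⟩ := band_ext_fwd hU hΨ0 hΨsub hΨadd F2 hne2 h2band u
  set F3 : Finset (U × U) := insert (u, yu) F2 with hF3
  have hp3 : (p, p) ∈ F3 := Finset.mem_insert_of_mem hp2
  have hu3 : (u, yu) ∈ F3 := Finset.mem_insert_self _ _
  have hne3 : F3.Nonempty := ⟨_, hp3⟩
  -- Step D: the partner v at the beating distance t from u
  obtain ⟨t, ht0, hti, htB⟩ := hbeat i
  obtain ⟨v, hvu, hvalign⟩ := ext_dompt hU F3 u t ht0.le
  obtain ⟨yv, h4min, h4band⟩ := band_ext_fwd hU hΨ0 hΨsub hΨadd F3 hne3 h3band v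
  set F4 : Finset (U × U) := insert (v, yv) F3 with hF4
  have hv4 : (v, yv) ∈ F4 := Finset.mem_insert_self _ _
  have hu4 : (u, yu) ∈ F4 := Finset.mem_insert_of_mem hu3
  -- the image distance of the seed pair is exactly Ψ t
  have hkey : dist yv yu = Ψ t := by
    have hmin := h4min (u, yu) hu3
    rw [hmin]
    apply le_antisymm
    · have h5 := Finset.inf'_le
        (fun q' : U × U => Ψ (dist v q'.1) + dist q'.2 yu) hu3
      simp only [dist_self, add_zero] at h5
      rw [hvu] at h5
      exact h5
    · apply Finset.le_inf' hne3
      intro q hq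
      have h6 := hvalign q hq
      have h7 : t ≤ dist v q.1 := by
        rw [h6]
        have : (0:ℝ) ≤ dist u q.1 := dist_nonneg
        linarith
      have h8 := hmono t (dist v q.1) ht0.le h7
      have h9 : (0:ℝ) ≤ dist q.2 yu := dist_nonneg
      linarith
  refine ⟨F4, ?_, h4band, Finset.mem_insert_of_mem hp3, ?_, ?_, ?_⟩
  · intro q hq
    exact Finset.mem_insert_of_mem (Finset.mem_insert_of_mem
      (Finset.mem_insert_of_mem (Finset.mem_insert_of_mem hq)))
  · exact ⟨y1, Finset.mem_insert_of_mem (Finset.mem_insert_of_mem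
      (Finset.mem_insert_of_mem (Finset.mem_insert_self _ _)))⟩
  · exact ⟨z2, Finset.mem_insert_of_mem (Finset.mem_insert_of_mem
      (Finset.mem_insert_self _ _))⟩
  · refine ⟨u, v, yu, yv, hu4, hv4, hup, ?_, ?_, ?_⟩
    · rw [dist_comm u v, hvu]; exact ht0
    · rw [dist_comm u v, hvu]; exact hti
    · rw [dist_comm u v, hvu, dist_comm yu yv, hkey]; exact htB

end Chain

section MainConstruction

open scoped Classical

lemma main_construction (U : Type) [MetricSpace U] (hU : IsUrysohn U)
    (Ψ : ℝ → ℝ) (B : ℕ → ℝ → ℝ)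
    (hΨ0 : Ψ 0 = 0)
    (hΨsub : ∀ s t, 0 ≤ s → 0 ≤ t → Ψ (s + t) ≤ Ψ s + Ψ t)
    (hΨadd : ∀ e t, 0 ≤ e → 0 ≤ t → Ψ t + e ≤ Ψ (t + e))
    (hΨcont : ∀ ε : ℝ, 0 < ε → ∃ η, 0 < η ∧ ∀ t, 0 ≤ t → t ≤ η → Ψ t ≤ ε)
    (hbeat : ∀ k : ℕ, ∃ t : ℝ, 0 < t ∧ t ≤ (2⁻¹ : ℝ)^k ∧ B (Nat.unpair k).1 t < Ψ t) :
    ∃ (g h : U → U) (p : U),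
      (∀ u v, dist (g u) (g v) ≤ Ψ (dist u v)) ∧
      (∀ u v, dist u v ≤ dist (g u) (g v)) ∧
      (∀ u v, dist (h u) (h v) ≤ dist u v) ∧
      (∀ u, h (g u) = u) ∧ (∀ u, g (h u) = u) ∧
      (∀ n : ℕ, ∀ ε : ℝ, 0 < ε → ∃ u v : U, dist u p < ε ∧ dist v p < ε ∧
        0 < dist u v ∧ dist u v ≤ ε ∧ B n (dist u v) < dist (g u) (g v)) := by
  classical
  have hmono := psi_mono hΨadd
  have hid := psi_id hΨ0 hΨadd
  have hnn := psi_nonneg hΨ0 hΨadd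
  haveI hcomp : CompleteSpace U := hU.1
  haveI hsep : TopologicalSpace.SeparableSpace U := hU.2.1
  haveI hneU : Nonempty U := ⟨(hU.2.2.1 ℝ).choose 0⟩
  obtain ⟨w, hw⟩ := TopologicalSpace.exists_dense_seq U
  set p : U := w 0 with hpdef
  have band0 : BandOK Ψ ({(p, p)} : Finset (U × U)) := by
    intro q hq q' hq'
    rw [Finset.mem_singleton] at hq hq'
    subst hq; subst hq'
    simp [hΨ0]
  let step := fun (i : ℕ) (F : {F : Finset (U × U) // BandOK Ψ F ∧ (p, p) ∈ F}) =>
    step_ex hU hΨ0 hΨsub hΨadd B hbeat p (w i) i F.1 F.2.1 F.2.2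
  let chain : ℕ → {F : Finset (U × U) // BandOK Ψ F ∧ (p, p) ∈ F} := fun n =>
    Nat.rec ⟨{(p, p)}, band0, Finset.mem_singleton_self _⟩
      (fun i Fi => ⟨(step i Fi).choose,
        (step i Fi).choose_spec.2.1, (step i Fi).choose_spec.2.2.1⟩) n
  have chain_spec : ∀ i : ℕ,
      (chain i).1 ⊆ (chain (i+1)).1 ∧ BandOK Ψ (chain (i+1)).1 ∧
      (p, p) ∈ (chain (i+1)).1 ∧ (∃ b, (w i, b) ∈ (chain (i+1)).1) ∧
      (∃ a, (a, w i) ∈ (chain (i+1)).1) ∧ SeedRec B p i (chain (i+1)).1 :=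
    fun i => (step i (chain i)).choose_spec
  have chain_mono : ∀ i j : ℕ, i ≤ j → (chain i).1 ⊆ (chain j).1 := by
    intro i j hij
    induction j with
    | zero =>
      rw [Nat.le_zero] at hij
      subst hij
      exact Finset.Subset.refl _
    | succ k ih =>
      rcases Nat.eq_or_lt_of_le hij with rfl | hlt
      · exact Finset.Subset.refl _
      · exact (ih (Nat.lt_succ_iff.1 hlt)).trans (chain_spec k).1
  set Rel : Set (U × U) := ⋃ i, ((chain i).1 : Set (U × U)) with hReldef
  have hmemRel : ∀ i : ℕ, ∀ q : U × U, q ∈ (chain i).1 → q ∈ Rel :=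
    fun i q hq => Set.mem_iUnion.2 ⟨i, Finset.mem_coe.2 hq⟩
  have relband : ∀ q ∈ Rel, ∀ q' ∈ Rel,
      dist q.1 q'.1 ≤ dist q.2 q'.2 ∧ dist q.2 q'.2 ≤ Ψ (dist q.1 q'.1) := by
    intro q hq q' hq'
    obtain ⟨i, hi⟩ := Set.mem_iUnion.1 hq
    obtain ⟨j, hj⟩ := Set.mem_iUnion.1 hq'
    have hi' : q ∈ (chain (max i j)).1 := chain_mono i _ (le_max_left i j) (Finset.mem_coe.1 hi)
    have hj' : q' ∈ (chain (max i j)).1 := chain_mono j _ (le_max_right i j) (Finset.mem_coe.1 hj)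
    exact (chain (max i j)).2.1 q hi' q' hj'
  have hDdense : Dense {a : U | ∃ b, (a, b) ∈ Rel} := by
    refine Dense.mono ?_ hw
    rintro x ⟨i, rfl⟩
    obtain ⟨b, hb⟩ := (chain_spec i).2.2.2.1
    exact ⟨b, hmemRel (i+1) _ hb⟩
  have hEdense : Dense {b : U | ∃ a, (a, b) ∈ Rel} := by
    refine Dense.mono ?_ hw
    rintro x ⟨i, rfl⟩
    obtain ⟨a, ha⟩ := (chain_spec i).2.2.2.2.1
    exact ⟨a, hmemRel (i+1) _ ha⟩
  have happrox : ∀ (u : U) (n : ℕ), ∃ q : U × U, q ∈ Rel ∧ dist u q.1 < 1/((n:ℝ)+1) := by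
    intro u n
    obtain ⟨a, ha, hd⟩ := Metric.mem_closure_iff.1 (hDdense u) (1/((n:ℝ)+1)) (by positivity)
    obtain ⟨b, hb⟩ := ha
    exact ⟨(a, b), hb, hd⟩
  have happrox' : ∀ (v : U) (n : ℕ), ∃ q : U × U, q ∈ Rel ∧ dist v q.2 < 1/((n:ℝ)+1) := by
    intro v n
    obtain ⟨b, hb, hd⟩ := Metric.mem_closure_iff.1 (hEdense v) (1/((n:ℝ)+1)) (by positivity)
    obtain ⟨a, ha⟩ := hb
    exact ⟨(a, b), ha, hd⟩
  choose ca hca1 hca2 using happrox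
  choose cb hcb1 hcb2 using happrox'
  have hhalf : ∀ n : ℕ, (1:ℝ)/((n:ℝ)+1) ≤ 2/((n:ℝ)+1) := by
    intro n
    have h1 : (0:ℝ) ≤ 1/((n:ℝ)+1) := by positivity
    have h2 : (2:ℝ)/((n:ℝ)+1) = 2*(1/((n:ℝ)+1)) := by ring
    linarith
  have hsmall : ∀ ε : ℝ, 0 < ε → ∃ N : ℕ, ∀ n : ℕ, N ≤ n → 2/((n:ℝ)+1) ≤ ε := by
    intro ε hε
    obtain ⟨N, hN⟩ := exists_nat_gt (2/ε)
    refine ⟨N, fun n hn => ?_⟩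
    have h1 : (2/ε) < (n:ℝ)+1 := by
      have : (N:ℝ) ≤ (n:ℝ) := by exact_mod_cast hn
      linarith
    rw [div_le_iff₀ (by positivity)]
    have h2 : (2/ε) * ε = 2 := div_mul_cancel₀ 2 (ne_of_gt hε)
    nlinarith [mul_lt_mul_of_pos_right h1 hε]
  have hfrac : ∀ n N : ℕ, N ≤ n → 1/((n:ℝ)+1) ≤ 1/((N:ℝ)+1) := by
    intro n N hn
    apply one_div_le_one_div_of_le (by positivity)
    have : (N:ℝ) ≤ (n:ℝ) := by exact_mod_cast hn
    linarith
  -- the forward limit map g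
  have hgc : ∀ u : U, CauchySeq (fun n => (ca u n).2) := by
    intro u
    refine cauchySeq_of_le_tendsto_0 (fun N => Ψ (2/((N:ℝ)+1))) ?_ ?_
    · intro n m N hn hm
      have t1 := hca2 u n
      have t2 := hca2 u m
      have hdom : dist (ca u n).1 (ca u m).1 ≤ 2/((N:ℝ)+1) := by
        have htri : dist (ca u n).1 (ca u m).1 ≤ dist u (ca u n).1 + dist u (ca u m).1 := by
          rw [dist_comm u (ca u n).1]
          exact dist_triangle _ _ _
        have f1 := hfrac n N hn
        have f2 := hfrac m N hm
        have heq2 : 1/((N:ℝ)+1) + 1/((N:ℝ)+1) = 2/((N:ℝ)+1) := by ring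
        linarith
      have hb := (relband _ (hca1 u n) _ (hca1 u m)).2
      calc dist (ca u n).2 (ca u m).2 ≤ Ψ (dist (ca u n).1 (ca u m).1) := hb
      _ ≤ Ψ (2/((N:ℝ)+1)) := hmono _ _ dist_nonneg hdom
    · rw [Metric.tendsto_atTop]
      intro ε hε
      obtain ⟨η, hη, hηP⟩ := hΨcont (ε/2) (by linarith)
      obtain ⟨N, hN⟩ := hsmall η hη
      refine ⟨N, fun n hn => ?_⟩
      have h1 := hηP (2/((n:ℝ)+1)) (by positivity) (hN n hn)
      have h2 := hnn (2/((n:ℝ)+1)) (by positivity)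
      rw [Real.dist_eq, sub_zero, abs_of_nonneg h2]
      linarith
  have hglim : ∀ u : U, ∃ x : U, Filter.Tendsto (fun n => (ca u n).2) Filter.atTop (nhds x) :=
    fun u => cauchySeq_tendsto_of_complete (hgc u)
  choose g hg using hglim
  -- the backward limit map h
  have hhc : ∀ v : U, CauchySeq (fun n => (cb v n).1) := by
    intro v
    refine cauchySeq_of_le_tendsto_0 (fun N => 2/((N:ℝ)+1)) ?_ ?_
    · intro n m N hn hm
      have t1 := hcb2 v n
      have t2 := hcb2 v m
      have himg : dist (cb v n).2 (cb v m).2 ≤ 2/((N:ℝ)+1) := by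
        have htri : dist (cb v n).2 (cb v m).2 ≤ dist v (cb v n).2 + dist v (cb v m).2 := by
          rw [dist_comm v (cb v n).2]
          exact dist_triangle _ _ _
        have f1 := hfrac n N hn
        have f2 := hfrac m N hm
        have heq2 : 1/((N:ℝ)+1) + 1/((N:ℝ)+1) = 2/((N:ℝ)+1) := by ring
        linarith
      have hb := (relband _ (hcb1 v n) _ (hcb1 v m)).1
      linarith
    · rw [Metric.tendsto_atTop]
      intro ε hε
      obtain ⟨N, hN⟩ := hsmall (ε/2) (by linarith)
      refine ⟨N, fun n hn => ?_⟩
      have h1 := hN n hn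
      rw [Real.dist_eq, sub_zero, abs_of_nonneg (by positivity)]
      linarith
  have hhlim : ∀ v : U, ∃ x : U, Filter.Tendsto (fun n => (cb v n).1) Filter.atTop (nhds x) :=
    fun v => cauchySeq_tendsto_of_complete (hhc v)
  choose h hh using hhlim
  -- g agrees with the correspondence
  have hGeq : ∀ q ∈ Rel, g q.1 = q.2 := by
    intro q hq
    have key : ∀ ε : ℝ, 0 < ε → dist (g q.1) q.2 ≤ 0 + ε := by
      intro ε hε
      obtain ⟨η, hη, hηP⟩ := hΨcont (ε/2) (by linarith)
      obtain ⟨N1, hN1⟩ := hsmall η hη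
      obtain ⟨N2, hN2⟩ := Metric.tendsto_atTop.1 (hg q.1) (ε/2) (by linarith)
      set n := max N1 N2 with hndef
      have e2 := hN2 n (le_max_right _ _)
      have hdomd : dist (ca q.1 n).1 q.1 ≤ η := by
        have t1 := hca2 q.1 n
        have f1 := hfrac n N1 (le_max_left _ _)
        have h2 : 2/((N1:ℝ)+1) ≤ η := hN1 N1 le_rfl
        have h3 := hhalf N1
        rw [dist_comm]
        linarith
      have hb := (relband _ (hca1 q.1 n) _ hq).2
      have h4 := hηP (dist (ca q.1 n).1 q.1) dist_nonneg hdomd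
      have htri := dist_triangle (g q.1) ((ca q.1 n).2) q.2
      rw [dist_comm ((ca q.1 n).2) (g q.1)] at e2
      linarith
    have h0 : dist (g q.1) q.2 ≤ 0 := le_of_forall_pos_le_add key
    exact dist_le_zero.1 h0
  -- h agrees with the reverse correspondence
  have hHeq : ∀ q ∈ Rel, h q.2 = q.1 := by
    intro q hq
    have key : ∀ ε : ℝ, 0 < ε → dist (h q.2) q.1 ≤ 0 + ε := by
      intro ε hε
      obtain ⟨N1, hN1⟩ := hsmall (ε/2) (by linarith)
      obtain ⟨N2, hN2⟩ := Metric.tendsto_atTop.1 (hh q.2) (ε/2) (by linarith)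
      set n := max N1 N2 with hndef
      have e2 := hN2 n (le_max_right _ _)
      have hlow := (relband _ (hcb1 q.2 n) _ hq).1
      have t1 := hcb2 q.2 n
      have f1 := hfrac n N1 (le_max_left _ _)
      have h2 : 2/((N1:ℝ)+1) ≤ ε/2 := hN1 N1 le_rfl
      have h3 := hhalf N1
      have htri := dist_triangle (h q.2) ((cb q.2 n).1) q.1
      rw [dist_comm ((cb q.2 n).1) (h q.2)] at e2
      rw [dist_comm q.2 (cb q.2 n).2] at t1
      linarith
    have h0 : dist (h q.2) q.1 ≤ 0 := le_of_forall_pos_le_add key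
    exact dist_le_zero.1 h0
  -- the upper modulus for g
  have hG1 : ∀ u v : U, dist (g u) (g v) ≤ Ψ (dist u v) := by
    intro u v
    apply le_of_forall_pos_le_add
    intro ε hε
    obtain ⟨η, hη, hηP⟩ := hΨcont (ε/3) (by linarith)
    obtain ⟨N1, hN1⟩ := hsmall η hη
    obtain ⟨N2, hN2⟩ := Metric.tendsto_atTop.1 (hg u) (ε/3) (by linarith)
    obtain ⟨N3, hN3⟩ := Metric.tendsto_atTop.1 (hg v) (ε/3) (by linarith)
    set n := max (max N1 N2) N3 with hndef
    have e1 := hN1 n (le_trans (le_max_left N1 N2) (le_max_left _ _))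
    have e2 := hN2 n (le_trans (le_max_right N1 N2) (le_max_left _ _))
    have e3 := hN3 n (le_max_right _ _)
    have t1 := hca2 u n
    have t2 := hca2 v n
    have hdom : dist (ca u n).1 (ca v n).1 ≤ dist u v + 2/((n:ℝ)+1) := by
      have htri := dist_triangle4 ((ca u n).1) u v ((ca v n).1)
      have hc1 : dist (ca u n).1 u = dist u (ca u n).1 := dist_comm _ _
      have hc2 : dist v (ca v n).1 = dist v (ca v n).1 := rfl
      have heq2 : 1/((n:ℝ)+1) + 1/((n:ℝ)+1) = 2/((n:ℝ)+1) := by ring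
      linarith
    have himg : dist ((ca u n).2) ((ca v n).2) ≤ Ψ (dist u v) + ε/3 := by
      have hb := (relband _ (hca1 u n) _ (hca1 v n)).2
      have hm := hmono _ _ dist_nonneg hdom
      have hs := hΨsub (dist u v) (2/((n:ℝ)+1)) dist_nonneg (by positivity)
      have hP := hηP (2/((n:ℝ)+1)) (by positivity) e1
      linarith
    have htri := dist_triangle4 (g u) ((ca u n).2) ((ca v n).2) (g v)
    rw [dist_comm ((ca u n).2) (g u)] at e2
    have e3' : dist ((ca v n).2) (g v) < ε/3 := e3
    calc dist (g u) (g v)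
        ≤ dist (g u) ((ca u n).2) + dist ((ca u n).2) ((ca v n).2) + dist ((ca v n).2) (g v) := htri
    _ ≤ ε/3 + (Ψ (dist u v) + ε/3) + ε/3 := by linarith
    _ = Ψ (dist u v) + ε := by ring
  -- the lower bound for g
  have hG2 : ∀ u v : U, dist u v ≤ dist (g u) (g v) := by
    intro u v
    apply le_of_forall_pos_le_add
    intro ε hε
    obtain ⟨N1, hN1⟩ := hsmall (ε/2) (by linarith)
    obtain ⟨N2, hN2⟩ := Metric.tendsto_atTop.1 (hg u) (ε/4) (by linarith)
    obtain ⟨N3, hN3⟩ := Metric.tendsto_atTop.1 (hg v) (ε/4) (by linarith)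
    set n := max (max N1 N2) N3 with hndef
    have e1 := hN1 n (le_trans (le_max_left N1 N2) (le_max_left _ _))
    have e2 := hN2 n (le_trans (le_max_right N1 N2) (le_max_left _ _))
    have e3 := hN3 n (le_max_right _ _)
    have t1 := hca2 u n
    have t2 := hca2 v n
    have hlow := (relband _ (hca1 u n) _ (hca1 v n)).1
    have htri := dist_triangle4 u ((ca u n).1) ((ca v n).1) v
    have himgtri := dist_triangle4 ((ca u n).2) (g u) (g v) ((ca v n).2)
    have hc1 : dist (ca v n).1 v = dist v (ca v n).1 := dist_comm _ _
    have hc2 : dist (g v) ((ca v n).2) = dist ((ca v n).2) (g v) := dist_comm _ _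
    have heq2 : 1/((n:ℝ)+1) + 1/((n:ℝ)+1) = 2/((n:ℝ)+1) := by ring
    linarith
  -- h is 1-Lipschitz
  have hH1 : ∀ u v : U, dist (h u) (h v) ≤ dist u v := by
    intro u v
    apply le_of_forall_pos_le_add
    intro ε hε
    obtain ⟨N1, hN1⟩ := hsmall (ε/2) (by linarith)
    obtain ⟨N2, hN2⟩ := Metric.tendsto_atTop.1 (hh u) (ε/4) (by linarith)
    obtain ⟨N3, hN3⟩ := Metric.tendsto_atTop.1 (hh v) (ε/4) (by linarith)
    set n := max (max N1 N2) N3 with hndef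
    have e1 := hN1 n (le_trans (le_max_left N1 N2) (le_max_left _ _))
    have e2 := hN2 n (le_trans (le_max_right N1 N2) (le_max_left _ _))
    have e3 := hN3 n (le_max_right _ _)
    have t1 := hcb2 u n
    have t2 := hcb2 v n
    have hlow := (relband _ (hcb1 u n) _ (hcb1 v n)).1
    have himg : dist ((cb u n).2) ((cb v n).2) ≤ dist u v + 2/((n:ℝ)+1) := by
      have htri := dist_triangle4 ((cb u n).2) u v ((cb v n).2)
      have hc1 : dist (cb u n).2 u = dist u (cb u n).2 := dist_comm _ _
      have heq2 : 1/((n:ℝ)+1) + 1/((n:ℝ)+1) = 2/((n:ℝ)+1) := by ring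
      linarith
    have htri := dist_triangle4 (h u) ((cb u n).1) ((cb v n).1) (h v)
    rw [dist_comm ((cb u n).1) (h u)] at e2
    have e3' : dist ((cb v n).1) (h v) < ε/4 := e3
    calc dist (h u) (h v)
        ≤ dist (h u) ((cb u n).1) + dist ((cb u n).1) ((cb v n).1) + dist ((cb v n).1) (h v) := htri
    _ ≤ ε/4 + (dist u v + 2/((n:ℝ)+1)) + ε/4 := by linarith
    _ ≤ dist u v + ε := by linarith
  -- inverses
  have hhg : ∀ u : U, h (g u) = u := by
    intro u
    have key : ∀ ε : ℝ, 0 < ε → dist (h (g u)) u ≤ 0 + ε := by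
      intro ε hε
      obtain ⟨N1, hN1⟩ := hsmall (ε/2) (by linarith)
      obtain ⟨N2, hN2⟩ := Metric.tendsto_atTop.1 (hg u) (ε/2) (by linarith)
      set n := max N1 N2 with hndef
      have e1 := hN1 n (le_max_left _ _)
      have e2 := hN2 n (le_max_right _ _)
      have hmem := hca1 u n
      have heqn : h ((ca u n).2) = (ca u n).1 := hHeq _ hmem
      have hl : dist (h (g u)) (h ((ca u n).2)) ≤ dist (g u) ((ca u n).2) := hH1 _ _
      rw [dist_comm ((ca u n).2) (g u)] at e2
      have htri := dist_triangle (h (g u)) (h ((ca u n).2)) u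
      rw [heqn] at htri hl
      have t1 := hca2 u n
      rw [dist_comm u (ca u n).1] at t1
      have h3 := hhalf n
      linarith
    have h0 : dist (h (g u)) u ≤ 0 := le_of_forall_pos_le_add key
    exact dist_le_zero.1 h0
  have hgh : ∀ v : U, g (h v) = v := by
    intro v
    have key : ∀ ε : ℝ, 0 < ε → dist (g (h v)) v ≤ 0 + ε := by
      intro ε hε
      obtain ⟨η, hη, hηP⟩ := hΨcont (ε/2) (by linarith)
      obtain ⟨N1, hN1⟩ := hsmall (ε/2) (by linarith)
      obtain ⟨N2, hN2⟩ := Metric.tendsto_atTop.1 (hh v) (min η (ε/2)) (lt_min hη (by linarith))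
      set n := max N1 N2 with hndef
      have e1 := hN1 n (le_max_left _ _)
      have e2 := hN2 n (le_max_right _ _)
      have hmem := hcb1 v n
      have heqn : g ((cb v n).1) = (cb v n).2 := hGeq _ hmem
      have hl : dist (g (h v)) (g ((cb v n).1)) ≤ Ψ (dist (h v) ((cb v n).1)) := hG1 _ _
      have hP : Ψ (dist (h v) ((cb v n).1)) ≤ ε/2 := by
        apply hηP _ dist_nonneg
        rw [dist_comm (h v) ((cb v n).1)]
        exact le_trans (le_of_lt e2) (min_le_left _ _)
      have htri := dist_triangle (g (h v)) (g ((cb v n).1)) v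
      rw [heqn] at htri hl
      have t1 := hcb2 v n
      rw [dist_comm v (cb v n).2] at t1
      have h3 := hhalf n
      have f1 := hfrac n N1 (le_max_left _ _)
      have h4 : 2/((N1:ℝ)+1) ≤ ε/2 := hN1 N1 le_rfl
      linarith
    have h0 : dist (g (h v)) v ≤ 0 := le_of_forall_pos_le_add key
    exact dist_le_zero.1 h0
  -- the seed pairs
  refine ⟨g, h, p, hG1, hG2, hH1, hhg, hgh, ?_⟩
  intro n ε hε
  obtain ⟨m, hm⟩ := exists_pow_lt_of_lt_one (show (0:ℝ) < ε/2 by linarith)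
    (by norm_num : (2⁻¹:ℝ) < 1)
  set k := Nat.pair n m with hkdef
  obtain ⟨u, v, bu, bv, hu, hv, hup, hd0, hdk, hB⟩ := (chain_spec k).2.2.2.2.2
  have hgu : g u = bu := hGeq (u, bu) (hmemRel (k+1) _ hu)
  have hgv : g v = bv := hGeq (v, bv) (hmemRel (k+1) _ hv)
  have hkm : (2⁻¹:ℝ)^k ≤ (2⁻¹:ℝ)^m :=
    pow_le_pow_of_le_one (by norm_num) (by norm_num) (Nat.right_le_pair n m)
  have hke : (2⁻¹:ℝ)^k < ε/2 := lt_of_le_of_lt hkm hm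
  have hvp : dist v p ≤ dist v u + dist u p := dist_triangle _ _ _
  have hc : dist v u = dist u v := dist_comm _ _
  have hBn : B n (dist u v) < dist bu bv := by
    have := hB
    rw [hkdef, Nat.unpair_pair] at this
    exact this
  refine ⟨u, v, ?_, ?_, hd0, ?_, ?_⟩
  · rw [hup]; linarith
  · rw [hup] at hvp; linarith
  · linarith
  · rw [hgu, hgv]; exact hBn

end MainConstruction

section Final

lemma mc_incl (U : Type) [MetricSpace U] (hU : IsUrysohn U)
    (Γ Δ : Set (ℝ → ℝ))
    (hΓ : IsMCSemigroup Γ) (hΔ : IsMCSemigroup Δ) (hΔc : MCCountablyGenerated Δ)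
    (heq : {g : U ≃ₜ U | LocallyGammaBicont Γ g} =
      {g : U ≃ₜ U | LocallyGammaBicont Δ g}) :
    Γ ⊆ Δ := by
  intro α hαΓ
  by_contra hαΔ
  have hmodα : IsModulus α := hΓ.1 α hαΓ
  have hnot : ∀ β ∈ Δ, ¬ MCle α β := fun β hβ hmc => hαΔ (hΔ.2.2.2 β hβ α hmodα hmc)
  have h2x : (fun x : ℝ => 2 * x) ∈ Δ := hΔ.2.1
  have hn2 := hnot _ h2x
  rw [MCle] at hn2
  push_neg at hn2
  obtain ⟨t₀, ht₀mem, ht₀lt⟩ := hn2 1 one_pos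
  have ht₀pos : 0 < t₀ := by
    rcases eq_or_lt_of_le ht₀mem.1 with hh | hh
    · exfalso
      rw [← hh, hmodα.1] at ht₀lt
      norm_num at ht₀lt
    · exact hh
  have hα2 : ∀ t, 0 < t → t ≤ t₀ → 2 * t ≤ α t := by
    intro t ht htt
    have hch := mod_chord hmodα ht htt
    have h1 : 0 < t / t₀ := by positivity
    have h2 : (t / t₀) * (2 * t₀) = 2 * t := by field_simp
    nlinarith
  set Ψ : ℝ → ℝ := fun t => α t + t with hΨdef
  have hΨval : ∀ t, Ψ t = α t + t := fun t => rfl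
  have hΨ0 : Ψ 0 = 0 := by rw [hΨval, hmodα.1]; ring
  have hΨsub : ∀ s t, 0 ≤ s → 0 ≤ t → Ψ (s + t) ≤ Ψ s + Ψ t := by
    intro s t hs ht
    have := mod_subadd hmodα hs ht
    rw [hΨval, hΨval, hΨval]
    linarith
  have hΨadd : ∀ e t, 0 ≤ e → 0 ≤ t → Ψ t + e ≤ Ψ (t + e) := by
    intro e t he ht
    have := mod_mono hmodα ht (by linarith : t ≤ t + e)
    rw [hΨval, hΨval]
    linarith
  have hΨcont : ∀ ε : ℝ, 0 < ε → ∃ η, 0 < η ∧ ∀ t, 0 ≤ t → t ≤ η → Ψ t ≤ ε := by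
    intro ε hε
    obtain ⟨η, hη, hP⟩ := mod_cont0 hmodα (show (0:ℝ) < ε/2 by linarith)
    refine ⟨min η (ε/2), lt_min hη (by linarith), fun t ht htη => ?_⟩
    have h1 := hP t ht (le_trans htη (min_le_left _ _))
    have h2 : t ≤ ε/2 := le_trans htη (min_le_right _ _)
    rw [hΨval]
    linarith
  obtain ⟨Δ₀, hΔ₀sub, hΔ₀count, hΔ₀gen⟩ := hΔc
  have hΔ₀ne : Δ₀.Nonempty := by
    obtain ⟨β, hβ, -⟩ := hΔ₀gen _ h2x
    exact ⟨β, hβ⟩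
  obtain ⟨Bf, hBf⟩ := Set.Countable.exists_eq_range hΔ₀count hΔ₀ne
  have hBmem : ∀ n, Bf n ∈ Δ := fun n => hΔ₀sub (hBf ▸ Set.mem_range_self n)
  have hbeat : ∀ k : ℕ, ∃ t : ℝ, 0 < t ∧ t ≤ (2⁻¹:ℝ)^k ∧ Bf (Nat.unpair k).1 t < Ψ t := by
    intro k
    have hn := hnot _ (hBmem (Nat.unpair k).1)
    rw [MCle] at hn
    push_neg at hn
    obtain ⟨t, htmem, htlt⟩ := hn ((2⁻¹:ℝ)^k) (by positivity)
    have htpos : 0 < t := by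
      rcases eq_or_lt_of_le htmem.1 with hh | hh
      · exfalso
        have hB0 : Bf (Nat.unpair k).1 0 = 0 := (hΔ.1 _ (hBmem _)).1
        rw [← hh, hmodα.1, hB0] at htlt
        norm_num at htlt
      · exact hh
    refine ⟨t, htpos, htmem.2, ?_⟩
    rw [hΨval]
    linarith
  obtain ⟨g, h, p, hG1, hG2, hH1, hhg, hgh, hseed⟩ :=
    main_construction U hU Ψ Bf hΨ0 hΨsub hΨadd hΨcont hbeat
  have hgcont : Continuous g := by
    rw [Metric.continuous_iff]
    intro x ε hε
    obtain ⟨η, hη, hP⟩ := hΨcont (ε/2) (by linarith)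
    refine ⟨η, hη, fun y hy => ?_⟩
    calc dist (g y) (g x) ≤ Ψ (dist y x) := hG1 y x
    _ ≤ ε/2 := hP (dist y x) dist_nonneg hy.le
    _ < ε := by linarith
  have hhcont : Continuous h := by
    rw [Metric.continuous_iff]
    intro x ε hε
    exact ⟨ε, hε, fun y hy => lt_of_le_of_lt (hH1 y x) hy⟩
  set G : U ≃ₜ U := ⟨⟨g, h, hhg, hgh⟩, hgcont, hhcont⟩ with hGdef
  have hGΓ : LocallyGammaBicont Γ G := by
    constructor
    · intro x
      refine ⟨t₀/2, by linarith, (fun x : ℝ => 2 * x) ∘ α,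
        hΓ.2.2.1 _ hΓ.2.1 α hαΓ, ?_⟩
      intro u v hu hv
      show dist (g u) (g v) ≤ 2 * α (dist u v)
      have hG := hG1 u v
      rw [hΨval] at hG
      have hduv : dist u v < t₀ := by
        have htri := dist_triangle u x v
        have hc : dist x v = dist v x := dist_comm _ _
        have hu' : dist u x < t₀/2 := hu
        have hv' : dist v x < t₀/2 := hv
        linarith
      rcases eq_or_lt_of_le (dist_nonneg : (0:ℝ) ≤ dist u v) with hz | hz
      · have huv : u = v := dist_eq_zero.1 hz.symm
        subst huv
        rw [dist_self, dist_self, hmodα.1]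
        norm_num
      · have h2t := hα2 (dist u v) hz hduv.le
        linarith
    · intro x
      refine ⟨1, one_pos, (fun x : ℝ => 2 * x), hΓ.2.1, ?_⟩
      intro u v _ _
      show dist (h u) (h v) ≤ 2 * dist u v
      have := hH1 u v
      have hd : (0:ℝ) ≤ dist u v := dist_nonneg
      linarith
  have hGΔ : LocallyGammaBicont Δ G := by
    have hmem : G ∈ {g : U ≃ₜ U | LocallyGammaBicont Γ g} := hGΓ
    rw [heq] at hmem
    exact hmem
  obtain ⟨ε, hε, β, hβΔ, hb⟩ := hGΔ.1 p
  obtain ⟨βb, hβb, hmc⟩ := hΔ₀gen β hβΔ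
  obtain ⟨a, ha0, hab⟩ := hmc
  obtain ⟨nb, hnb⟩ : ∃ n, Bf n = βb := by
    rw [hBf] at hβb
    obtain ⟨n, hn⟩ := hβb
    exact ⟨n, hn⟩
  obtain ⟨u, v, hup, hvp, hduv0, hduvle, hBuv⟩ := hseed nb (min ε a) (lt_min hε ha0)
  have hb' : dist (g u) (g v) ≤ β (dist u v) :=
    hb u v (lt_of_lt_of_le hup (min_le_left _ _)) (lt_of_lt_of_le hvp (min_le_left _ _))
  have hββb : β (dist u v) ≤ βb (dist u v) :=
    hab _ ⟨hduv0.le, le_trans hduvle (min_le_right _ _)⟩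
  rw [hnb] at hBuv
  linarith

end Final


/-- If two countably generated MC-semigroups define the same group of locally
bicontinuous auto-homeomorphisms of the Urysohn space, then they are equal. -/
theorem mc_semigroup_reconstruction (U : Type) [MetricSpace U] (hU : IsUrysohn U)
    (Γ Δ : Set (ℝ → ℝ))
    (hΓ : IsMCSemigroup Γ) (hΓc : MCCountablyGenerated Γ)
    (hΔ : IsMCSemigroup Δ) (hΔc : MCCountablyGenerated Δ)
    (heq : {g : U ≃ₜ U | LocallyGammaBicont Γ g} =
      {g : U ≃ₜ U | LocallyGammaBicont Δ g}) :
    Γ = Δ := by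
  apply Set.Subset.antisymm
  · exact mc_incl U hU Γ Δ hΓ hΔ hΔc heq
  · exact mc_incl U hU Δ Γ hΔ hΓ hΓc heq.symm
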